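/- arXiv:2407.18122 — 2 statements merged into one kernel-verified Lean document; each statement's English description precedes it below -/
import Mathlib

section
/- For n ≥ 1, a binary cyclic sequence s of length 2^n has linear complexity c(s) = 2^n if and only if the weight of s is odd. -/
/-- The operator `E + 1` on binary cyclic sequences of length `N`:
`((E + 1) s)(i) = s(i + 1) + s(i)`. -/
def dOp {N : ℕ} (s : ZMod N → ZMod 2) : ZMod N → ZMod 2 :=
  fun i => s (i + 1) + s i

/-- The linear complexity of a binary cyclic sequence: the least `c ≥ 0` with
`(E + 1)^c s = 0`. -/
noncomputable def linComp {N : ℕ} (s : ZMod N → ZMod 2) : ℕ :=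
  sInf {c : ℕ | dOp^[c] s = 0}

/-- The weight of a binary cyclic sequence: the number of positions equal to `1`. -/
noncomputable def seqWeight {N : ℕ} (s : ZMod N → ZMod 2) : ℕ :=
  {i : ZMod N | s i = 1}.ncard

/-!
Iterating `E + 1` a power of two times is cheap in characteristic two: `(E + 1)^(2^k) = E^(2^k) + 1`,
and by induction on `k` this gives `(E + 1)^(2^k - 1) = 1 + E + ⋯ + E^(2^k - 1)`.
For `N = 2^n` the first identity shows `(E + 1)^N = E^N + 1 = 0`, while the second turns
`(E + 1)^(N - 1) s` into the constant sequence whose value is the sum of all entries of `s`,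
i.e. the parity of its weight. So `c(s) = N` exactly when that parity is odd.
-/

open Finset

lemma dOp_zero {N : ℕ} : dOp (0 : ZMod N → ZMod 2) = 0 := by
  funext i
  simp [dOp]

lemma dOp_iterate_eq_zero_of_le {N : ℕ} {s : ZMod N → ZMod 2} {c d : ℕ} (hcd : c ≤ d)
    (hc : dOp^[c] s = 0) : dOp^[d] s = 0 := by
  rw [← Nat.sub_add_cancel hcd, Function.iterate_add_apply, hc,
    Function.iterate_fixed dOp_zero]

lemma linComp_le_iff {N : ℕ} {s : ZMod N → ZMod 2} (hs : ∃ c, dOp^[c] s = 0) {c : ℕ} :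
    linComp s ≤ c ↔ dOp^[c] s = 0 :=
  ⟨fun h => dOp_iterate_eq_zero_of_le h (Nat.sInf_mem hs), fun h => Nat.sInf_le h⟩

lemma dOp_iterate_two_pow_apply {N : ℕ} (n : ℕ) (s : ZMod N → ZMod 2) (i : ZMod N) :
    dOp^[2 ^ n] s i = s (i + 2 ^ n) + s i := by
  induction n generalizing s i with
  | zero => simp [dOp]
  | succ n ih =>
    rw [pow_succ 2 n, mul_two, Function.iterate_add_apply, ih, ih, ih, pow_succ (2 : ZMod N),
      mul_two, add_assoc i]
    have h : ∀ a b c : ZMod 2, a + b + (b + c) = a + c := by decide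
    exact h ..

lemma dOp_iterate_two_pow_sub_one_apply {N : ℕ} (n : ℕ) (s : ZMod N → ZMod 2) (i : ZMod N) :
    dOp^[2 ^ n - 1] s i = ∑ j ∈ range (2 ^ n), s (i + j) := by
  induction n generalizing s with
  | zero => simp
  | succ n ih =>
    have h : 2 ^ (n + 1) - 1 = (2 ^ n - 1) + 2 ^ n := by
      have := Nat.one_le_two_pow (n := n); rw [pow_succ]; omega
    rw [h, Function.iterate_add_apply, ih, pow_succ, mul_two, sum_range_add, ← sum_add_distrib]
    refine sum_congr rfl fun j _ => ?_
    rw [dOp_iterate_two_pow_apply]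
    push_cast
    rw [add_comm, add_assoc, add_comm (j : ZMod N)]

lemma sum_range_natCast_zmod {M : Type*} [AddCommMonoid M] (N : ℕ) [NeZero N] (f : ZMod N → M) :
    ∑ j ∈ range N, f j = ∑ x, f x :=
  sum_nbij' (fun j => (j : ZMod N)) ZMod.val (fun _ _ => mem_univ _)
    (fun x _ => mem_range.mpr (ZMod.val_lt x))
    (fun _ hj => ZMod.val_cast_of_lt (mem_range.mp hj))
    (fun x _ => ZMod.natCast_zmod_val x) (fun _ _ => rfl)

lemma sum_zmod_two_eq_ncard {α : Type*} [Fintype α] (f : α → ZMod 2) :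
    ∑ x, f x = ({x | f x = 1}.ncard : ZMod 2) := by
  classical
  have h01 : ∀ a : ZMod 2, a = if a = 1 then 1 else 0 := by decide
  rw [sum_congr rfl fun x _ => h01 (f x), sum_boole, Set.ncard_eq_toFinset_card',
    Set.toFinset_ofPred]

lemma dOp_iterate_two_pow_sub_one {n : ℕ} (s : ZMod (2 ^ n) → ZMod 2) :
    dOp^[2 ^ n - 1] s = Function.const _ (seqWeight s : ZMod 2) := by
  funext i
  rw [dOp_iterate_two_pow_sub_one_apply, sum_range_natCast_zmod _ (fun x => s (i + x))]
  exact (Equiv.sum_comp (Equiv.addLeft i) s).trans (sum_zmod_two_eq_ncard s)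

lemma dOp_iterate_two_pow {n : ℕ} (s : ZMod (2 ^ n) → ZMod 2) : dOp^[2 ^ n] s = 0 := by
  funext i
  have h : (2 ^ n : ZMod (2 ^ n)) = 0 := by exact_mod_cast ZMod.natCast_self (2 ^ n)
  rw [dOp_iterate_two_pow_apply, h, add_zero, CharTwo.add_self_eq_zero, Pi.zero_apply]

theorem stmt_2_general (n : ℕ) (s : ZMod (2 ^ n) → ZMod 2) :
    linComp s = 2 ^ n ↔ Odd (seqWeight s) := by
  have hzero := dOp_iterate_two_pow s
  have hle : linComp s ≤ 2 ^ n := (linComp_le_iff ⟨_, hzero⟩).mpr hzero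
  have hpos : 1 ≤ 2 ^ n := Nat.one_le_two_pow
  rw [← Nat.not_even_iff_odd, ← ZMod.natCast_eq_zero_iff_even,
    ← Function.const_eq_zero (ι := ZMod (2 ^ n)), ← dOp_iterate_two_pow_sub_one, ← linComp_le_iff ⟨_, hzero⟩]
  omega

theorem stmt_2 (n : ℕ) (hn : 1 ≤ n) (s : ZMod (2 ^ n) → ZMod 2) :
    linComp s = 2 ^ n ↔ Odd (seqWeight s) :=
  stmt_2_general n s
end

section
/- Let k, t, n be integers with 2 ≤ k < n < 2^k and k ≤ t. Then there exists a (2^k, 2^t; n, 2^t − 1)-de Bruijn array code of size 2^{n(2^t − 1) − k − t}. -/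
/-!
The columns of the arrays are taken from a perfect factor: `2 ^ (n - k)` binary sequences of
period `2 ^ k` in which every binary word of length `n` occurs exactly once as a window. For
`2 ^ (k - 1) ≤ n < 2 ^ k` the solutions of the difference equation `Δⁿ g = 1` all have least
period `2 ^ k`, and one solution per translation orbit is a perfect factor. For smaller `n` one
starts from a de Bruijn sequence of order `k - 1` (built by Lempel's doubling) and lifts it by
prefix sums, tracking parities through binomial moments.

Label the sequences of the perfect factor by the vectors of `V = (ZMod 2) ^ (n - k)`. A
codeword assigns to each of the `2 ^ t` columns a label and a phase in `ZMod (2 ^ k)`, the labels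
summing to a fixed `δ ≠ 0` and the phases to `0`; its column `j` is the labelled sequence shifted
by the phase. Translating arrays is an action of `ZMod (2 ^ k) × ZMod (2 ^ t)` on codewords (it
keeps the phase sum since `2 ^ k ∣ 2 ^ t`), and a free one: a labelling invariant under a
nontrivial rotation of `ZMod (2 ^ t)` sums to `0 ≠ δ`. The `n × (2 ^ t - 1)` window at the
origin determines the codeword, the last column being forced by the two sums, so one codeword
per orbit is a de Bruijn array code.
-/

/-- `C` is an `(r, s; n, m)`-de Bruijn array code of size `Δ`: every `n × m` binary
matrix appears exactly once as a window in exactly one codeword. -/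
def IsDBAC (r s n m Δ : ℕ) (C : Fin Δ → (ZMod r × ZMod s → ZMod 2)) : Prop :=
  ∀ M : Fin n → Fin m → ZMod 2,
    ∃! p : Fin Δ × ZMod r × ZMod s,
      ∀ (x : Fin n) (y : Fin m),
        C p.1 (p.2.1 + (x : ℕ), p.2.2 + (y : ℕ)) = M x y

open Finset Function fwdDiff

section General

theorem Function.Periodic.sum_range_add {M : Type*} [AddCommGroup M] {u : ℕ → M} {N : ℕ}
    (hu : Periodic u N) (z : ℕ) : ∑ y ∈ range N, u (z + y) = ∑ y ∈ range N, u y := by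
  induction z with
  | zero => simp
  | succ z ih =>
    have h := (sum_range_succ' (fun y => u (z + y)) N).symm.trans
      (sum_range_succ (fun y => u (z + y)) N)
    rw [add_zero, hu z] at h
    rw [← ih, ← add_right_cancel h]
    exact sum_congr rfl fun y _ => by rw [add_assoc, add_comm 1]

theorem Function.Periodic.apply_val_add_natCast {α : Type*} {u : ℕ → α} {N : ℕ} [NeZero N]
    (hu : Periodic u N) (a : ZMod N) (x : ℕ) : u (a + x).val = u (a.val + x) := by
  rw [ZMod.val_add, ZMod.val_natCast, Nat.add_mod_mod, hu.map_mod_nat]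

theorem eq_or_eq_add_of_mod_eq {N a b : ℕ} (ha : a < N * 2) (hb : b < N * 2)
    (h : a % N = b % N) : a = b ∨ a = b + N ∨ b = a + N := by
  have hN : 0 < N := by omega
  have ha' := Nat.mod_add_div a N
  have hb' := Nat.mod_add_div b N
  have hqa : a / N < 2 := Nat.div_lt_of_lt_mul (by omega)
  have hqb : b / N < 2 := Nat.div_lt_of_lt_mul (by omega)
  interval_cases hA : a / N <;> interval_cases hB : b / N <;> omega

theorem AddAction.bijective_vadd_out {G X : Type*} [AddGroup G] [AddAction G X]
    (hfree : ∀ (g : G) (x : X), g +ᵥ x = x → g = 0) :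
    Bijective fun p : Quotient (AddAction.orbitRel G X) × G => p.2 +ᵥ p.1.out := by
  constructor
  · rintro ⟨q, g⟩ ⟨q', g'⟩ (h : g +ᵥ q.out = g' +ᵥ q'.out)
    obtain rfl : q = q' := by
      rw [← q.out_eq, ← q'.out_eq]
      exact Quotient.sound ⟨-g + g', show (-g + g') +ᵥ q'.out = q.out by
        rw [add_vadd, ← h, neg_vadd_vadd]⟩
    have := hfree (-g' + g) q.out (by rw [add_vadd, h, neg_vadd_vadd])
    rw [neg_add_eq_zero.1 this]
  · intro x
    obtain ⟨g, hg⟩ := Quotient.mk_out (s := AddAction.orbitRel G X) x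
    exact ⟨(Quotient.mk _ x, -g), by simp only [← hg, neg_vadd_vadd]⟩

theorem sum_zmod_eq_sum_fin_add_last {M : Type*} [AddCommMonoid M] (S : ℕ) [NeZero S]
    (f : ZMod S → M) :
    ∑ g, f g = ∑ y : Fin (S - 1), f (y : ℕ) + f ((S - 1 : ℕ) : ZMod S) := by
  rw [Fin.sum_univ_eq_sum_range (fun y => f y), ← sum_range_succ,
    Nat.sub_add_cancel (NeZero.pos S), ← Fin.sum_univ_eq_sum_range (fun y => f y)]
  refine (Fintype.sum_bijective (fun y : Fin S => ((y : ℕ) : ZMod S))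
    ((Fintype.bijective_iff_injective_and_card _).2 ⟨fun y y' h => ?_, by simp⟩)
    _ _ fun _ => rfl).symm
  simpa [ZMod.val_natCast_of_lt y.isLt, ZMod.val_natCast_of_lt y'.isLt, Fin.ext_iff]
    using congrArg ZMod.val h

theorem bijective_restrict_of_sum_eq {M : Type*} [AddCommGroup M] (S : ℕ) [NeZero S] (a : M) :
    Bijective fun w : {w : ZMod S → M // ∑ g, w g = a} => fun y : Fin (S - 1) => w.1 y := by
  have hS := NeZero.pos S
  have hlast : ∀ g : ZMod S, ¬ g.val < S - 1 → g = ((S - 1 : ℕ) : ZMod S) := fun g hg => by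
    rw [← ZMod.natCast_zmod_val g, show g.val = S - 1 by have := g.val_lt; omega]
  have hval : ∀ y : Fin (S - 1), ((y : ℕ) : ZMod S).val = y :=
    fun y => ZMod.val_natCast_of_lt (by omega)
  constructor
  · rintro ⟨w, hw⟩ ⟨w', hw'⟩ h
    have hlow : ∀ y : Fin (S - 1), w y = w' y := fun y => congrFun h y
    have htop : w ((S - 1 : ℕ) : ZMod S) = w' ((S - 1 : ℕ) : ZMod S) := by
      rw [sum_zmod_eq_sum_fin_add_last] at hw hw'
      rw [Fintype.sum_congr _ _ hlow] at hw
      exact add_left_cancel (hw.trans hw'.symm)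
    refine Subtype.ext (funext fun g => ?_)
    by_cases hg : g.val < S - 1
    · simpa [ZMod.natCast_zmod_val] using hlow ⟨g.val, hg⟩
    · show w g = w' g
      rw [hlast g hg, htop]
  · intro v
    refine ⟨⟨fun g => if h : g.val < S - 1 then v ⟨g.val, h⟩ else a - ∑ y, v y, ?_⟩, ?_⟩
    · rw [sum_zmod_eq_sum_fin_add_last,
        dif_neg (by rw [ZMod.val_natCast_of_lt (by omega)]; omega)]
      simp only [hval, Fin.is_lt, dif_pos, Fin.eta]
      abel
    · funext y
      simp only [hval, Fin.is_lt, dif_pos, Fin.eta]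

theorem ZMod.exponent_ne_zero {p t : ℕ} {b : ZMod (p ^ t)} (hb : b ≠ 0) : t ≠ 0 := by
  rintro rfl
  exact hb (Subsingleton.elim (α := ZMod 1) _ _)

theorem ZMod.natCast_two_pow_pred_ne_zero {t : ℕ} (ht : t ≠ 0) :
    ((2 ^ (t - 1) : ℕ) : ZMod (2 ^ t)) ≠ 0 := by
  rw [Ne, ZMod.natCast_eq_zero_iff]
  exact Nat.not_dvd_of_pos_of_lt (by positivity) (Nat.pow_lt_pow_right one_lt_two (by omega))

theorem ZMod.two_pow_pred_mem_zmultiples {t : ℕ} {b : ZMod (2 ^ t)} (hb : b ≠ 0) :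
    ((2 ^ (t - 1) : ℕ) : ZMod (2 ^ t)) ∈ AddSubgroup.zmultiples b := by
  have ht := ZMod.exponent_ne_zero hb
  have ho : addOrderOf b ∣ 2 ^ t := by simpa using addOrderOf_dvd_card (x := b)
  obtain ⟨a, -, hoa⟩ := (Nat.dvd_prime_pow Nat.prime_two).1 ho
  have ha : a ≠ 0 := by
    rintro rfl
    exact hb (AddMonoid.addOrderOf_eq_one_iff.1 (by simpa using hoa))
  -- `u` is the element of order two of the cyclic group generated by `b`
  set u := 2 ^ (a - 1) • b
  have hu2 : u + u = 0 := by
    rw [← add_nsmul, ← two_mul, ← pow_succ', Nat.sub_add_cancel (Nat.pos_of_ne_zero ha), ← hoa,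
      addOrderOf_nsmul_eq_zero]
  have hu0 : u ≠ 0 := nsmul_ne_zero_of_lt_addOrderOf (by positivity)
    (by rw [hoa]; exact Nat.pow_lt_pow_right one_lt_two (by omega))
  have hval : u.val = 2 ^ (t - 1) := by
    have h1 := congrArg ZMod.val hu2
    rw [ZMod.val_add, ZMod.val_zero] at h1
    obtain ⟨c, hc⟩ := Nat.dvd_of_mod_eq_zero h1
    have h2 := ZMod.val_pos.2 hu0
    have h3 := u.val_lt
    have h4 : 2 ^ t = 2 * 2 ^ (t - 1) := by rw [← pow_succ', Nat.sub_add_cancel (by omega)]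
    rcases c with _ | _ | c
    · omega
    · omega
    · nlinarith
  rw [← hval, ZMod.natCast_zmod_val]
  exact AddSubgroup.nsmul_mem_zmultiples b _

theorem sum_eq_zero_of_periodic_zmod_two_pow {V : Type*} [AddCommGroup V] [Module (ZMod 2) V]
    {t : ℕ} (c : ZMod (2 ^ t) → V) {b : ZMod (2 ^ t)} (hb : b ≠ 0) (hc : Periodic c b) :
    ∑ g, c g = 0 := by
  have ht := ZMod.exponent_ne_zero hb
  obtain ⟨m, hm⟩ := AddSubgroup.mem_zmultiples_iff.1 (ZMod.two_pow_pred_mem_zmultiples hb)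
  set u := ((2 ^ (t - 1) : ℕ) : ZMod (2 ^ t))
  have hcu : Periodic c u := hm ▸ hc.zsmul m
  have hu2 : u + u = 0 := by
    rw [← Nat.cast_add, ← two_mul, ← pow_succ', Nat.sub_add_cancel (by omega), ZMod.natCast_self]
  refine sum_involution (fun g _ => g + u) (fun g _ => by rw [hcu, ZModModule.add_self])
    (fun g _ _ h => ZMod.natCast_two_pow_pred_ne_zero ht (add_eq_left.1 h))
    (fun _ _ => mem_univ _) (fun g _ => by rw [add_assoc, hu2, add_zero])

end General

section PerfectFactor

def window (n : ℕ) (u : ℕ → ZMod 2) (i : ℕ) : Fin n → ZMod 2 := fun x => u (i + x)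

theorem window_mod {n N : ℕ} {u : ℕ → ZMod 2} (hu : Periodic u N) (a : ℕ) :
    window n u (a % N) = window n u a :=
  funext fun x => (hu.add_const x).map_mod_nat a

theorem window_val_natCast {n N : ℕ} {u : ℕ → ZMod 2} (hu : Periodic u N) (a : ℕ) :
    window n u ((a : ZMod N).val) = window n u a := by
  rw [ZMod.val_natCast, window_mod hu]

theorem window_val_add_natCast {n N : ℕ} [NeZero N] {u : ℕ → ZMod 2} (hu : Periodic u N)
    (a : ZMod N) (c : ℕ) : window n u (a + c).val = window n u (a.val + c) :=
  funext fun x => (hu.add_const x).apply_val_add_natCast a c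

structure PerfectFactor (n N : ℕ) where
  D : Type
  [fintype : Fintype D]
  seq : D → ℕ → ZMod 2
  periodic : ∀ d, Periodic (seq d) N
  bijective : Bijective fun p : D × ZMod N => window n (seq p.1) p.2.val

attribute [instance] PerfectFactor.fintype

theorem PerfectFactor.card_mul {n N : ℕ} [NeZero N] (P : PerfectFactor n N) :
    Fintype.card P.D * N = 2 ^ n := by
  simpa [Fintype.card_prod] using Fintype.card_of_bijective P.bijective

theorem PerfectFactor.eq_of_window_eq {n N : ℕ} (P : PerfectFactor n N) {d d' : P.D}
    {a a' : ℕ} (h : window n (P.seq d) a = window n (P.seq d') a') :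
    d = d' ∧ a % N = a' % N := by
  have := @P.bijective.1 (d, a) (d', a') (by
    simpa only [window_val_natCast (P.periodic _)] using h)
  simpa [ZMod.natCast_eq_natCast_iff'] using this

end PerfectFactor

section PrefixSum

def prefixSum (ε : ZMod 2) (u : ℕ → ZMod 2) (z : ℕ) : ZMod 2 := ε + ∑ y ∈ range z, u y

variable {ε ε' : ZMod 2} {u u' : ℕ → ZMod 2}

theorem prefixSum_succ (z : ℕ) : prefixSum ε u (z + 1) = prefixSum ε u z + u z := by
  simp only [prefixSum, sum_range_succ, add_assoc]

theorem prefixSum_one_succ (u : ℕ → ZMod 2) (z : ℕ) :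
    prefixSum 1 u (z + 1) = prefixSum 0 u z + u z + 1 := by
  simp only [prefixSum, sum_range_succ]
  ring

theorem prefixSum_add (z w : ℕ) :
    prefixSum ε u (z + w) = prefixSum ε u z + ∑ y ∈ range w, u (z + y) := by
  simp only [prefixSum, sum_range_add, add_assoc]

theorem prefixSum_add_period {N : ℕ} (hu : Periodic u N) (z : ℕ) :
    prefixSum ε u (z + N) = prefixSum ε u z + ∑ y ∈ range N, u y := by
  rw [prefixSum_add, hu.sum_range_add]

theorem Function.Periodic.prefixSum {N : ℕ} (hu : Periodic u N)
    (h0 : ∑ y ∈ range N, u y = 0) (ε : ZMod 2) : Periodic (prefixSum ε u) N := fun z => by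
  rw [prefixSum_add_period hu, h0, add_zero]

theorem window_prefixSum_eq_iff {n i i' : ℕ} :
    window (n + 1) (prefixSum ε u) i = window (n + 1) (prefixSum ε' u') i' ↔
      prefixSum ε u i = prefixSum ε' u' i' ∧ window n u i = window n u' i' := by
  constructor
  · intro h
    refine ⟨by simpa [window] using congrFun h 0, funext fun x => ?_⟩
    have hs := congrFun h x.succ
    have hc := congrFun h x.castSucc
    simp only [window, Fin.val_succ, Fin.val_castSucc, ← add_assoc, prefixSum_succ] at hs hc ⊢
    rw [hc] at hs
    exact add_left_cancel hs
  · rintro ⟨h0, hw⟩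
    funext x
    simp only [window, prefixSum_add, h0]
    congr 1
    exact sum_congr rfl fun y hy => congrFun hw ⟨y, by have := mem_range.1 hy; omega⟩

end PrefixSum

namespace PerfectFactor

variable {n N : ℕ} [NeZero N]

def liftEven (P : PerfectFactor n N) (hP : ∀ d, ∑ z ∈ range N, P.seq d z = 0) :
    PerfectFactor (n + 1) N where
  D := ZMod 2 × P.D
  seq p := prefixSum p.1 (P.seq p.2)
  periodic p := (P.periodic p.2).prefixSum (hP p.2) p.1
  bijective := by
    refine (Fintype.bijective_iff_injective_and_card _).2 ⟨?_, ?_⟩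
    · rintro ⟨⟨ε, d⟩, i⟩ ⟨⟨ε', d'⟩, i'⟩ h
      obtain ⟨h0, hw⟩ := window_prefixSum_eq_iff.1 h
      obtain ⟨rfl, rfl⟩ := Prod.ext_iff.1 (@P.bijective.1 (d, i) (d', i') hw)
      simp only [prefixSum, add_left_inj] at h0
      rw [h0]
    · simp only [Fintype.card_prod, ZMod.card, Fintype.card_pi, prod_const, card_univ,
        Fintype.card_fin, pow_succ, ← P.card_mul]
      ring

def liftOdd (P : PerfectFactor n N) (hP : ∀ d, ∑ z ∈ range N, P.seq d z = 1) :
    PerfectFactor (n + 1) (N * 2) where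
  D := P.D
  seq d := prefixSum 0 (P.seq d)
  periodic d z := by
    rw [mul_two, ← add_assoc, prefixSum_add_period (P.periodic d),
      prefixSum_add_period (P.periodic d), hP, add_assoc, CharTwo.add_self_eq_zero, add_zero]
  bijective := by
    refine (Fintype.bijective_iff_injective_and_card _).2 ⟨?_, ?_⟩
    · rintro ⟨d, i⟩ ⟨d', i'⟩ h
      obtain ⟨h0, hw⟩ := window_prefixSum_eq_iff.1 h
      obtain ⟨rfl, hi⟩ := P.eq_of_window_eq hw
      have hshift : ∀ z, prefixSum 0 (P.seq d) (z + N) ≠ prefixSum 0 (P.seq d) z := fun z => by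
        rw [prefixSum_add_period (P.periodic d), hP]
        simp
      rcases eq_or_eq_add_of_mod_eq i.val_lt i'.val_lt hi with h | h | h
      · rw [ZMod.val_injective _ h]
      · exact absurd (h ▸ h0) (hshift _)
      · exact absurd (h ▸ h0.symm) (hshift _)
    · simp [Fintype.card_prod, pow_succ, ← P.card_mul, mul_assoc]

end PerfectFactor

section Moments

theorem sum_range_choose_eq_choose_succ (M l : ℕ) :
    ∑ z ∈ range M, z.choose l = M.choose (l + 1) := by
  induction M with
  | zero => simp
  | succ M ih => rw [sum_range_succ, ih, Nat.choose_succ_succ', add_comm]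

theorem choose_two_pow_eq_zero {j v : ℕ} (h0 : 0 < v) (hv : v < 2 ^ j) :
    ((2 ^ j).choose v : ZMod 2) = 0 :=
  (ZMod.natCast_eq_zero_iff _ 2).2 (Nat.prime_two.dvd_choose_pow h0.ne' hv.ne)

theorem choose_add_two_pow {j v : ℕ} (u : ℕ) (hv : v < 2 ^ j) :
    ((u + 2 ^ j).choose v : ZMod 2) = u.choose v := by
  rw [Nat.add_choose_eq, Nat.cast_sum, sum_eq_single (v, 0)]
  · simp
  · rintro ⟨a, b⟩ hab hne
    rw [HasAntidiagonal.mem_antidiagonal] at hab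
    have hb : 0 < b := by
      by_contra! hb
      exact hne (by simp_all)
    rw [Nat.cast_mul, choose_two_pow_eq_zero (j := j) hb (by omega), mul_zero]
  · simp

def moment (M l : ℕ) (u : ℕ → ZMod 2) : ZMod 2 := ∑ z ∈ range M, (z.choose l : ZMod 2) * u z

theorem moment_zero_eq_sum (M : ℕ) (u : ℕ → ZMod 2) : moment M 0 u = ∑ z ∈ range M, u z := by
  simp [moment]

theorem moment_add_one (M l : ℕ) (u : ℕ → ZMod 2) :
    moment M l (fun z => u z + 1) = moment M l u + (M.choose (l + 1) : ZMod 2) := by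
  simp only [moment, mul_add, mul_one, sum_add_distrib, ← sum_range_choose_eq_choose_succ,
    Nat.cast_sum]

theorem moment_two_pow_succ {j l : ℕ} (hl : l < 2 ^ j) {u v : ℕ → ZMod 2}
    (h : ∀ z < 2 ^ j, u z + u (z + 2 ^ j) = v z) :
    moment (2 ^ (j + 1)) l u = moment (2 ^ j) l v := by
  rw [moment, pow_succ, mul_two, sum_range_add, ← sum_add_distrib]
  refine sum_congr rfl fun z hz => ?_
  rw [add_comm (2 ^ j) z, choose_add_two_pow z hl, ← mul_add, h z (mem_range.1 hz)]

theorem moment_eq_zero_of_add_two_pow {j l : ℕ} (hl : l + 1 < 2 ^ j) {u : ℕ → ZMod 2}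
    (hu : ∀ z, u (z + 2 ^ j) = u z + 1) : moment (2 ^ (j + 1)) l u = 0 := by
  rw [moment_two_pow_succ (v := fun _ => 0 + 1) (by omega) fun z _ => by
    rw [hu, ← add_assoc, CharTwo.add_self_eq_zero]]
  rw [moment_add_one, choose_two_pow_eq_zero (by omega) hl]
  simp [moment]

theorem moment_prefixSum {j l : ℕ} (hl : l + 1 < 2 ^ j) (ε : ZMod 2) (u : ℕ → ZMod 2) :
    moment (2 ^ j) l (prefixSum ε u) = moment (2 ^ j) l u + moment (2 ^ j) (l + 1) u := by
  have hM : ((2 ^ j).choose (l + 1) : ZMod 2) = 0 := choose_two_pow_eq_zero (by omega) hl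
  have hswap : ∑ z ∈ range (2 ^ j), (z.choose l : ZMod 2) * ∑ y ∈ range z, u y
      = ∑ y ∈ range (2 ^ j), (∑ z ∈ Ico (y + 1) (2 ^ j), (z.choose l : ZMod 2)) * u y := by
    simp only [mul_sum, sum_mul, range_eq_Ico]
    rw [sum_Ico_Ico_comm']
  have htail : ∀ y ∈ range (2 ^ j), ∑ z ∈ Ico (y + 1) (2 ^ j), (z.choose l : ZMod 2)
      = (y.choose l : ZMod 2) + (y.choose (l + 1) : ZMod 2) := fun y hy => by
    rw [sum_Ico_eq_sub _ (mem_range.1 hy), ← Nat.cast_sum, ← Nat.cast_sum,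
      sum_range_choose_eq_choose_succ, sum_range_choose_eq_choose_succ, hM, zero_sub,
      ZModModule.neg_eq_self, Nat.choose_succ_succ', Nat.cast_add]
  simp only [moment, prefixSum, mul_add, sum_add_distrib]
  rw [← sum_mul, ← Nat.cast_sum, sum_range_choose_eq_choose_succ, hM, zero_mul, zero_add, hswap,
    sum_congr rfl fun y hy => by rw [htail y hy]]
  simp only [add_mul, sum_add_distrib]

variable {M : ℕ} {u : ℕ → ZMod 2}

theorem moment_zero_comp_add (hu : Periodic u M) (c : ℕ) :
    moment M 0 (fun z => u (z + c)) = moment M 0 u := by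
  simp only [moment_zero_eq_sum, ← hu.sum_range_add c, add_comm _ c]

theorem moment_one_comp_add_one (hu : Periodic u M) (hM : (M : ZMod 2) = 0)
    (h0 : moment M 0 u = 0) : moment M 1 (fun z => u (z + 1)) = moment M 1 u := by
  have hsum : ∑ z ∈ range M, u (z + 1) = 0 := by
    rw [← h0, ← moment_zero_comp_add hu 1, moment_zero_eq_sum]
  have h := (sum_range_succ' (fun z => (z : ZMod 2) * u z) M).symm.trans
    (sum_range_succ (fun z => (z : ZMod 2) * u z) M)
  simp only [Nat.cast_add, Nat.cast_one, add_mul, one_mul, sum_add_distrib, hsum, hM,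
    Nat.cast_zero, zero_mul, add_zero] at h
  simpa [moment] using h

theorem moment_one_comp_add (hu : Periodic u M) (hM : (M : ZMod 2) = 0)
    (h0 : moment M 0 u = 0) (c : ℕ) : moment M 1 (fun z => u (z + c)) = moment M 1 u := by
  induction c with
  | zero => rfl
  | succ c ih =>
    rw [← ih, ← moment_one_comp_add_one (hu.add_const c) hM
      (by rw [moment_zero_comp_add hu, h0])]
    simp only [add_assoc, add_comm 1 c]

end Moments

section Affine

theorem fwdDiff_iter_const {M G : Type*} [AddCommMonoid M] [AddCommGroup G] (h : M) {m : ℕ}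
    (hm : 0 < m) (c : G) : (Δ_[h])^[m] (fun _ : M => c) = 0 := by
  obtain ⟨m, rfl⟩ := Nat.exists_eq_succ_of_ne_zero hm.ne'
  rw [iterate_succ_apply, fwdDiff_const]
  exact iterate_fixed (fwdDiff_const h 0) m

theorem fwdDiff_iter_eq_sum_choose (g : ℕ → ZMod 2) (L z : ℕ) :
    (Δ_[1])^[L] g z = ∑ l ∈ range (L + 1), (L.choose l : ZMod 2) * g (z + l) := by
  rw [fwdDiff_iter_eq_sum_shift]
  exact sum_congr rfl fun l _ => by simp [zsmul_eq_mul]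

theorem fwdDiff_iter_two_pow (g : ℕ → ZMod 2) (j z : ℕ) :
    (Δ_[1])^[2 ^ j] g z = g (z + 2 ^ j) + g z := by
  induction j generalizing g z with
  | zero => simp [fwdDiff, sub_eq_add_neg, CharTwo.neg_eq]
  | succ j ih =>
    rw [pow_succ, mul_two, iterate_add_apply, ih, ih, ih, ← add_assoc z, add_assoc (g _),
      ← add_assoc (g (z + 2 ^ j)), CharTwo.add_self_eq_zero (g (z + 2 ^ j)), zero_add]

@[ext]
structure AffineSol (n : ℕ) where
  seq : ℕ → ZMod 2
  solves : (Δ_[1])^[n] seq = 1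

namespace AffineSol

variable {n : ℕ}

theorem periodic {k : ℕ} (hn : n < 2 ^ k) (g : AffineSol n) : Periodic g.seq (2 ^ k) := by
  intro z
  have h : (Δ_[1])^[2 ^ k] g.seq = 0 := by
    rw [← Nat.sub_add_cancel hn.le, iterate_add_apply, g.solves]
    exact fwdDiff_iter_const 1 (by omega) 1
  rw [← CharTwo.add_eq_zero, ← fwdDiff_iter_two_pow, h, Pi.zero_apply]

theorem not_periodic {j : ℕ} (hj : 2 ^ j ≤ n) (g : AffineSol n) : ¬ Periodic g.seq (2 ^ j) := by
  intro hper
  have h : (Δ_[1])^[2 ^ j] g.seq = 0 := funext fun z => by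
    rw [fwdDiff_iter_two_pow, hper, CharTwo.add_self_eq_zero, Pi.zero_apply]
  have hsplit : (Δ_[1])^[n] g.seq = (Δ_[1])^[n - 2 ^ j] ((Δ_[1])^[2 ^ j] g.seq) := by
    rw [← iterate_add_apply, Nat.sub_add_cancel hj]
  have h0 : (Δ_[1])^[n - 2 ^ j] (0 : ℕ → ZMod 2) = 0 := iterate_fixed (fwdDiff_const 1 0) _
  have := congrFun g.solves 0
  rw [hsplit, h, h0] at this
  exact zero_ne_one this

theorem recurrence {g : ℕ → ZMod 2} (hg : (Δ_[1])^[n] g = 1) (z : ℕ) :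
    g (z + n) = 1 + ∑ l ∈ range n, (n.choose l : ZMod 2) * g (z + l) := by
  have h := congrFun hg z
  rw [fwdDiff_iter_eq_sum_choose, sum_range_succ, Nat.choose_self, Nat.cast_one, one_mul,
    Pi.one_apply] at h
  rw [← h, add_right_comm, CharTwo.add_self_eq_zero, zero_add]

def extend (w : Fin n → ZMod 2) (z : ℕ) : ZMod 2 :=
  if h : z < n then w ⟨z, h⟩
  else 1 + ∑ l ∈ (range n).attach, (n.choose l : ZMod 2) * extend w (z - n + l)
decreasing_by
  have := mem_range.1 l.2
  omega

theorem extend_solves (w : Fin n → ZMod 2) : (Δ_[1])^[n] (extend w) = 1 := by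
  funext z
  rw [fwdDiff_iter_eq_sum_choose, sum_range_succ, Nat.choose_self, Nat.cast_one, one_mul,
    extend, dif_neg (by omega), Nat.add_sub_cancel,
    sum_attach (range n) fun l => (n.choose l : ZMod 2) * extend w (z + l), add_left_comm,
    CharTwo.add_self_eq_zero, add_zero, Pi.one_apply]

theorem window_bijective : Bijective fun g : AffineSol n => window n g.seq 0 := by
  constructor
  · rintro ⟨g, hg⟩ ⟨g', hg'⟩ h
    have hinit : ∀ x : Fin n, g x = g' x := fun x => by simpa [window] using congrFun h x
    suffices ∀ z, g z = g' z from AffineSol.ext (funext this)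
    intro z
    induction z using Nat.strong_induction_on with
    | _ z ih =>
      by_cases hz : z < n
      · exact hinit ⟨z, hz⟩
      · obtain ⟨z, rfl⟩ := Nat.exists_eq_add_of_le (not_lt.1 hz)
        rw [add_comm, recurrence hg, recurrence hg']
        exact congrArg _ (sum_congr rfl fun l hl => by rw [ih _ (by have := mem_range.1 hl; omega)])
  · intro w
    refine ⟨⟨extend w, extend_solves w⟩, funext fun x => ?_⟩
    simp [window, extend]

variable {k : ℕ}

instance [Fact (n < 2 ^ k)] : AddAction (ZMod (2 ^ k)) (AffineSol n) where
  vadd a g := ⟨fun z => g.seq (z + a.val), funext fun z => by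
    rw [fwdDiff_iter_comp_add, g.solves]
    rfl⟩
  zero_vadd g := AffineSol.ext (funext fun z =>
    show g.seq (z + (0 : ZMod (2 ^ k)).val) = g.seq z by rw [ZMod.val_zero, add_zero])
  add_vadd a b g := AffineSol.ext (funext fun z =>
    show g.seq (z + (a + b).val) = g.seq (z + a.val + b.val) by
      rw [ZMod.val_add, ((g.periodic Fact.out).const_add z).map_mod_nat, add_assoc])

theorem vadd_seq [Fact (n < 2 ^ k)] (a : ZMod (2 ^ k)) (g : AffineSol n) :
    (a +ᵥ g).seq = fun z => g.seq (z + a.val) := rfl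

theorem eq_zero_of_vadd_eq_self [Fact (n < 2 ^ k)] (hn : 2 ^ (k - 1) ≤ n) {a : ZMod (2 ^ k)}
    {g : AffineSol n} (h : a +ᵥ g = g) : a = 0 := by
  by_contra ha
  have hmem := AddSubgroup.zmultiples_le.2 (AddAction.mem_stabilizer_iff.2 h)
    (ZMod.two_pow_pred_mem_zmultiples ha)
  refine g.not_periodic hn fun z => ?_
  have := congrFun (congrArg AffineSol.seq (AddAction.mem_stabilizer_iff.1 hmem)) z
  rwa [vadd_seq, ZMod.val_natCast_of_lt
    (Nat.pow_lt_pow_right one_lt_two (by have := ZMod.exponent_ne_zero ha; omega))] at this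

/-- For `2 ^ (k - 1) ≤ n < 2 ^ k` every solution has least period exactly `2 ^ k`, so one
solution from each orbit under translation gives a perfect factor. -/
noncomputable def perfectFactor (h1 : 2 ^ (k - 1) ≤ n) (h2 : n < 2 ^ k) :
    PerfectFactor n (2 ^ k) :=
  haveI : Fact (n < 2 ^ k) := ⟨h2⟩
  haveI : Finite (AffineSol n) := Finite.of_injective _ window_bijective.1
  { D := Quotient (AddAction.orbitRel (ZMod (2 ^ k)) (AffineSol n))
    fintype := Fintype.ofFinite _
    seq q := q.out.seq
    periodic q := q.out.periodic h2
    bijective := by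
      convert window_bijective.comp
        (AddAction.bijective_vadd_out fun _ _ => eq_zero_of_vadd_eq_self h1) using 1
      funext ⟨q, i⟩ x
      simp [window, vadd_seq, add_comm] }

end AffineSol

end Affine

/-- A de Bruijn sequence of order `κ` with even weight and odd first moment: these conditions
survive Lempel's doubling, and the lifting chain needs them. -/
structure DeBruijnSeq (κ : ℕ) where
  seq : ℕ → ZMod 2
  periodic : Periodic seq (2 ^ κ)
  bijective : Bijective fun i : ZMod (2 ^ κ) => window κ seq i.val
  moment_zero : moment (2 ^ κ) 0 seq = 0
  moment_one : moment (2 ^ κ) 1 seq = 1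

namespace DeBruijnSeq

variable {κ : ℕ} (B : DeBruijnSeq κ)

theorem pos (B : DeBruijnSeq κ) : 0 < κ :=
  Nat.pos_of_ne_zero fun h => by
    subst h
    simpa [moment] using B.moment_one

theorem natCast_two_pow (B : DeBruijnSeq κ) : ((2 ^ κ : ℕ) : ZMod 2) = 0 :=
  (ZMod.natCast_eq_zero_iff _ 2).2 (dvd_pow_self 2 B.pos.ne')

def rotate (c : ℕ) : DeBruijnSeq κ where
  seq z := B.seq (z + c)
  periodic := B.periodic.add_const c
  bijective := by
    convert B.bijective.comp (Equiv.addRight (c : ZMod (2 ^ κ))).bijective using 1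
    funext i
    rw [comp_apply, Equiv.coe_addRight, window_val_add_natCast B.periodic]
    funext x
    simp only [window, add_right_comm]
  moment_zero := by rw [moment_zero_comp_add B.periodic, B.moment_zero]
  moment_one := by
    rw [moment_one_comp_add B.periodic B.natCast_two_pow B.moment_zero, B.moment_one]

theorem exists_rotate_run_of_ones : ∃ c, ∀ j < κ, (B.rotate c).seq (1 + j) = 1 := by
  obtain ⟨i, hi⟩ := B.bijective.2 fun _ => 1
  refine ⟨i.val + 2 ^ κ - 1, fun j hj => ?_⟩
  have := Nat.one_le_two_pow (n := κ)
  show B.seq (1 + j + (i.val + 2 ^ κ - 1)) = 1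
  rw [show 1 + j + (i.val + 2 ^ κ - 1) = i.val + j + 2 ^ κ by omega, B.periodic]
  exact congrFun hi ⟨j, hj⟩

def toPerfectFactor : PerfectFactor κ (2 ^ κ) where
  D := Unit
  seq _ := B.seq
  periodic _ := B.periodic
  bijective := B.bijective.comp (Equiv.punitProd _).bijective

def pairs : PerfectFactor (κ + 1) (2 ^ κ) :=
  B.toPerfectFactor.liftEven fun _ => (moment_zero_eq_sum _ _).symm.trans B.moment_zero

theorem prefixSum_periodic (ε : ZMod 2) : Periodic (prefixSum ε B.seq) (2 ^ κ) :=
  B.pairs.periodic (ε, ())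

theorem prefixSum_periodic_two_pow_succ (ε : ZMod 2) :
    Periodic (prefixSum ε B.seq) (2 ^ (κ + 1)) := by
  simpa [pow_succ, mul_comm] using (B.prefixSum_periodic ε).nat_mul 2

theorem sum_pairs_seq (d : B.pairs.D) : ∑ z ∈ range (2 ^ κ), B.pairs.seq d z = 1 := by
  rw [← moment_zero_eq_sum]
  exact (moment_prefixSum (Nat.one_lt_two_pow B.pos.ne') d.1 B.seq).trans
    (by rw [B.moment_zero, B.moment_one, zero_add])

/-- Lempel's doubling: the two prefix-sum sequences of `B` have period `2 ^ κ` and between them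
every window of length `κ + 1` exactly once. When `B` has its run of ones at `1, …, κ`, they
agree there, and splicing them gives one sequence of period `2 ^ (κ + 1)`. -/
def crossJoin (z : ℕ) : ZMod 2 :=
  if 1 ≤ z % 2 ^ (κ + 1) ∧ z % 2 ^ (κ + 1) ≤ 2 ^ κ then prefixSum 1 B.seq (z + 1)
  else prefixSum 0 B.seq z

theorem crossJoin_periodic : Periodic B.crossJoin (2 ^ (κ + 1)) := by
  intro z
  simp only [crossJoin, Nat.add_mod_right, add_right_comm z _ 1]
  rw [B.prefixSum_periodic_two_pow_succ 1 (z + 1), B.prefixSum_periodic_two_pow_succ 0 z]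

theorem crossJoin_of_lt {r : ℕ} (hr : r < 2 ^ (κ + 1)) : B.crossJoin r =
    if 1 ≤ r ∧ r ≤ 2 ^ κ then prefixSum 1 B.seq (r + 1) else prefixSum 0 B.seq r := by
  rw [crossJoin, Nat.mod_eq_of_lt hr]

theorem crossJoin_add_crossJoin {z : ℕ} (hz : z < 2 ^ κ) :
    B.crossJoin z + B.crossJoin (z + 2 ^ κ) = B.seq z + 1 := by
  have hM : 2 ^ (κ + 1) = 2 ^ κ + 2 ^ κ := by rw [pow_succ, mul_two]
  have hsum : prefixSum 0 B.seq z + prefixSum 1 B.seq (z + 1) = B.seq z + 1 := by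
    rw [prefixSum_one_succ, ← add_assoc, ← add_assoc, CharTwo.add_self_eq_zero, zero_add]
  rw [B.crossJoin_of_lt (by omega), B.crossJoin_of_lt (by omega)]
  rcases Nat.eq_zero_or_pos z with rfl | hz0
  · rw [if_neg (by omega), if_pos (by simp [Nat.one_le_two_pow]), add_right_comm,
      B.prefixSum_periodic]
    exact hsum
  · rw [if_pos (by omega), if_neg (by omega), B.prefixSum_periodic, add_comm]
    exact hsum

section RunOfOnes

variable {B} (hrun : ∀ j < κ, B.seq (1 + j) = 1)
include hrun

theorem prefixSum_one_succ_of_run {j : ℕ} (h1 : 1 ≤ j) (hj : j ≤ κ) :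
    prefixSum 1 B.seq (j + 1) = prefixSum 0 B.seq j := by
  rw [prefixSum_one_succ, show j = 1 + (j - 1) by omega, hrun _ (by omega), add_assoc,
    CharTwo.add_self_eq_zero, add_zero]

theorem window_crossJoin {T : ℕ} (hT : T < 2 ^ (κ + 1)) :
    window (κ + 1) B.crossJoin T = if 1 ≤ T ∧ T ≤ 2 ^ κ
      then window (κ + 1) (prefixSum 1 B.seq) (T + 1)
      else window (κ + 1) (prefixSum 0 B.seq) T := by
  have hκ : κ < 2 ^ κ := Nat.lt_two_pow_self
  have hM : 2 ^ (κ + 1) = 2 ^ κ + 2 ^ κ := by rw [pow_succ, mul_two]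
  have hagree : ∀ j, 1 ≤ j → j ≤ κ → prefixSum 1 B.seq (j + 1) = prefixSum 0 B.seq j :=
    fun _ => prefixSum_one_succ_of_run hrun
  split_ifs with hs <;> funext x <;> have hx := x.isLt <;> simp only [window]
  · rw [B.crossJoin_of_lt (by omega), Nat.add_right_comm T 1]
    split_ifs with h
    · rfl
    · -- the window runs past `2 ^ κ`, where the two prefix sums agree again
      obtain ⟨j, hj⟩ : ∃ j, T + x = j + 2 ^ κ := ⟨T + x - 2 ^ κ, by omega⟩
      rw [hj, add_right_comm j, B.prefixSum_periodic, B.prefixSum_periodic,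
        hagree j (by omega) (by omega)]
  · rcases lt_or_ge (T + x) (2 ^ (κ + 1)) with h | h
    · rw [B.crossJoin_of_lt h]
      split_ifs with h'
      · exact hagree _ (by omega) (by omega)
      · rfl
    · obtain ⟨r, hr⟩ : ∃ r, T + x = r + 2 ^ (κ + 1) := ⟨T + x - 2 ^ (κ + 1), by omega⟩
      rw [hr, B.crossJoin_periodic, B.prefixSum_periodic_two_pow_succ,
        B.crossJoin_of_lt (by omega)]
      split_ifs with h'
      · exact hagree _ (by omega) (by omega)
      · rfl

theorem crossJoin_bijective :
    Bijective fun i : ZMod (2 ^ (κ + 1)) => window (κ + 1) B.crossJoin i.val := by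
  refine (Fintype.bijective_iff_injective_and_card _).2 ⟨fun i i' h => ?_, by simp⟩
  have hi := i.val_lt
  have hi' := i'.val_lt
  have h2 : 2 ≤ 2 ^ κ := Nat.le_self_pow B.pos.ne' 2
  simp only [window_crossJoin hrun hi, window_crossJoin hrun hi'] at h
  apply ZMod.val_injective
  split_ifs at h with h1 h2 h2
  · have hmod := (B.pairs.eq_of_window_eq (d := (1, ())) (d' := (1, ())) h).2
    rcases eq_or_eq_add_of_mod_eq (N := 2 ^ κ) (a := i.val + 1) (b := i'.val + 1) (by omega)
      (by omega) hmod with e | e | e <;> omega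
  · exact (one_ne_zero (congrArg Prod.fst
      (B.pairs.eq_of_window_eq (d := (1, ())) (d' := (0, ())) h).1)).elim
  · exact (zero_ne_one (congrArg Prod.fst
      (B.pairs.eq_of_window_eq (d := (0, ())) (d' := (1, ())) h).1)).elim
  · have hmod := (B.pairs.eq_of_window_eq (d := (0, ())) (d' := (0, ())) h).2
    rcases eq_or_eq_add_of_mod_eq (N := 2 ^ κ) (a := i.val) (b := i'.val) (by omega) (by omega)
      hmod with e | e | e <;> omega

def double (hκ : 2 ≤ κ) : DeBruijnSeq (κ + 1) where
  seq := B.crossJoin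
  periodic := B.crossJoin_periodic
  bijective := crossJoin_bijective hrun
  moment_zero := by
    rw [moment_two_pow_succ (Nat.two_pow_pos κ) fun z hz => B.crossJoin_add_crossJoin hz,
      moment_add_one, B.moment_zero, zero_add, Nat.choose_one_right, B.natCast_two_pow]
  moment_one := by
    have h2 : 2 < 2 ^ κ := by
      calc 2 < 2 ^ 2 := by norm_num
        _ ≤ 2 ^ κ := Nat.pow_le_pow_right (by norm_num) hκ
    rw [moment_two_pow_succ (by omega) fun z hz => B.crossJoin_add_crossJoin hz, moment_add_one,
      B.moment_one, choose_two_pow_eq_zero (by norm_num) h2, add_zero]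

end RunOfOnes

-- the sequence `0110`
def two : DeBruijnSeq 2 where
  seq z := if z % 4 = 1 ∨ z % 4 = 2 then 1 else 0
  periodic z := by simp [Nat.add_mod_right]
  bijective := by decide
  moment_zero := by decide
  moment_one := by decide

theorem nonempty (hκ : 2 ≤ κ) : Nonempty (DeBruijnSeq κ) := by
  induction κ, hκ using Nat.le_induction with
  | base => exact ⟨two⟩
  | succ κ hκ ih =>
    obtain ⟨B⟩ := ih
    obtain ⟨c, hc⟩ := B.exists_rotate_run_of_ones
    exact ⟨double hc hκ⟩

/-- The vanishing moments keep every weight even along the chain of lifts. -/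
theorem exists_perfectFactor (B : DeBruijnSeq κ) {n : ℕ} (h1 : κ + 2 ≤ n)
    (h2 : n ≤ 2 ^ κ + κ) : ∃ P : PerfectFactor n (2 ^ (κ + 1)),
      ∀ d l, l + n ≤ 2 ^ κ + κ → moment (2 ^ (κ + 1)) l (P.seq d) = 0 := by
  induction n, h1 using Nat.le_induction with
  | base =>
    refine ⟨B.pairs.liftOdd B.sum_pairs_seq, fun (d : B.pairs.D) l hl =>
      moment_eq_zero_of_add_two_pow (by omega) fun z => ?_⟩
    show prefixSum 0 (B.pairs.seq d) (z + 2 ^ κ) = prefixSum 0 (B.pairs.seq d) z + 1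
    rw [prefixSum_add_period (B.pairs.periodic d), B.sum_pairs_seq]
  | succ n hn ih =>
    obtain ⟨P, hP⟩ := ih (by omega)
    refine ⟨P.liftEven fun d => (moment_zero_eq_sum _ _).symm.trans (hP d 0 (by omega)),
      fun d l hl => ?_⟩
    show moment _ l (prefixSum d.1 (P.seq d.2)) = 0
    rw [moment_prefixSum (by omega), hP _ _ (by omega), hP _ _ (by omega), add_zero]

end DeBruijnSeq

theorem PerfectFactor.nonempty {n k : ℕ} (hkn : k < n) (hn : n < 2 ^ k) :
    Nonempty (PerfectFactor n (2 ^ k)) := by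
  by_cases hbig : 2 ^ (k - 1) ≤ n
  · exact ⟨AffineSol.perfectFactor hbig hn⟩
  · rcases k with _ | κ
    · exact (hbig (show 1 ≤ n by omega)).elim
    rw [Nat.add_sub_cancel] at hbig
    have hκ : 2 ≤ κ := by
      by_contra h
      interval_cases κ <;> omega
    obtain ⟨B⟩ := DeBruijnSeq.nonempty hκ
    obtain ⟨P, -⟩ := B.exists_perfectFactor (n := n) (by omega) (by omega)
    exact ⟨P⟩

section Codes

def arrayWindow (n m : ℕ) {r s : ℕ} (A : ZMod r × ZMod s → ZMod 2) (p : ZMod r × ZMod s) :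
    Fin n → Fin m → ZMod 2 :=
  fun x y => A (p.1 + (x : ℕ), p.2 + (y : ℕ))

theorem isDBAC_iff_bijective {r s n m Δ : ℕ} (C : Fin Δ → ZMod r × ZMod s → ZMod 2) :
    IsDBAC r s n m Δ C ↔
      Bijective fun p : Fin Δ × ZMod r × ZMod s => arrayWindow n m (C p.1) p.2 := by
  simp only [bijective_iff_existsUnique, IsDBAC, arrayWindow, funext_iff]

theorem exists_isDBAC_of_free {r s n m Δ : ℕ} [NeZero r] [NeZero s] {Y : Type*} [Fintype Y]
    [AddAction (ZMod r × ZMod s) Y]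
    (hfree : ∀ (g : ZMod r × ZMod s) (y : Y), g +ᵥ y = y → g = 0)
    (A : Y → ZMod r × ZMod s → ZMod 2) (hA : ∀ g y p, A (g +ᵥ y) p = A y (p + g))
    (hwin : Bijective fun y => arrayWindow n m (A y) 0) (hΔ : Δ * (r * s) = 2 ^ (n * m)) :
    ∃ C : Fin Δ → ZMod r × ZMod s → ZMod 2, IsDBAC r s n m Δ C := by
  classical
  have horb := AddAction.bijective_vadd_out hfree
  have hcard : Fintype.card (Quotient (AddAction.orbitRel (ZMod r × ZMod s) Y)) = Δ := by
    have h := Fintype.card_of_bijective (hwin.comp horb)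
    simp only [Fintype.card_prod, ZMod.card, Fintype.card_fun, Fintype.card_fin,
      ← pow_mul] at h
    rw [mul_comm m] at h
    exact Nat.eq_of_mul_eq_mul_right (Nat.mul_pos (NeZero.pos r) (NeZero.pos s))
      (h.trans hΔ.symm)
  set e := (Fintype.equivFinOfCardEq hcard).symm
  refine ⟨fun c => A (e c).out, (isDBAC_iff_bijective _).2 ?_⟩
  convert hwin.comp (horb.comp (e.bijective.prodMap bijective_id)) using 1
  funext ⟨c, p⟩
  ext x y
  simp only [arrayWindow, comp_apply, Prod.map_apply, id, hA]
  congr 1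
  ext <;> simp [add_comm]

end Codes

section ColumnCode

variable {k t : ℕ} {V : Type*} [AddCommGroup V] {δ : V}

/-- A codeword: for each column a label in `V`, naming a sequence of the perfect factor, and a
phase. The labels sum to `δ` and the phases to `0`, so the last column is determined by the
others. -/
abbrev ColumnCode (V : Type*) [AddCommGroup V] (k t : ℕ) (δ : V) : Type _ :=
  {w : ZMod (2 ^ t) → V × ZMod (2 ^ k) // ∑ j, w j = (δ, 0)}

instance [Fact (k ≤ t)] : AddAction (ZMod (2 ^ k) × ZMod (2 ^ t)) (ColumnCode V k t δ) where
  vadd g w := ⟨fun j => w.1 (j + g.2) + (0, g.1), by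
    have h : (2 ^ t : ℕ) • g.1 = 0 := by
      rw [nsmul_eq_mul, (ZMod.natCast_eq_zero_iff _ _).2 (pow_dvd_pow 2 Fact.out), zero_mul]
    rw [sum_add_distrib,
      Fintype.sum_equiv (Equiv.addRight g.2) (fun j => w.1 (j + g.2)) w.1 fun _ => rfl, w.2,
      sum_const, card_univ, ZMod.card, Prod.smul_mk, smul_zero, h, Prod.mk_add_mk, add_zero,
      add_zero]⟩
  zero_vadd w := Subtype.ext (funext fun j => show w.1 (j + 0) + (0, 0) = w.1 j by simp)
  add_vadd g h w := Subtype.ext (funext fun j =>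
    show w.1 (j + (g + h).2) + (0, (g + h).1) = w.1 (j + g.2 + h.2) + (0, h.1) + (0, g.1) by
      rw [Prod.snd_add, Prod.fst_add, add_assoc j, add_comm g.2, add_assoc,
        Prod.mk_add_mk (0 : V), zero_add, add_comm h.1])

theorem ColumnCode.eq_zero_of_vadd_eq_self [Module (ZMod 2) V] [Fact (k ≤ t)] (hδ : δ ≠ 0)
    (g : ZMod (2 ^ k) × ZMod (2 ^ t)) (w : ColumnCode V k t δ) (h : g +ᵥ w = w) : g = 0 := by
  have hcol : ∀ j, w.1 (j + g.2) + (0, g.1) = w.1 j :=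
    fun j => congrFun (congrArg Subtype.val h) j
  have h2 : g.2 = 0 := by
    by_contra hb
    refine hδ ?_
    have hsum : ∑ j, (w.1 j).1 = δ := by simpa [Prod.fst_sum] using congrArg Prod.fst w.2
    rw [← hsum]
    exact sum_eq_zero_of_periodic_zmod_two_pow (fun j => (w.1 j).1) hb
      (fun j => by simpa using congrArg Prod.fst (hcol j))
  have h1 : g.1 = 0 := by simpa [h2] using congrArg Prod.snd (hcol 0)
  exact Prod.ext h1 h2

variable {n : ℕ} (P : PerfectFactor n (2 ^ k)) (EV : P.D ≃ V)

def ColumnCode.array (w : ColumnCode V k t δ) : ZMod (2 ^ k) × ZMod (2 ^ t) → ZMod 2 :=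
  fun p => P.seq (EV.symm (w.1 p.2).1) ((w.1 p.2).2 + p.1).val

theorem ColumnCode.array_vadd [Fact (k ≤ t)] (g : ZMod (2 ^ k) × ZMod (2 ^ t))
    (w : ColumnCode V k t δ) (p : ZMod (2 ^ k) × ZMod (2 ^ t)) :
    ColumnCode.array P EV (g +ᵥ w) p = ColumnCode.array P EV w (p + g) := by
  show P.seq (EV.symm (w.1 (p.2 + g.2) + (0, g.1)).1) ((w.1 (p.2 + g.2) + (0, g.1)).2 + p.1).val
    = P.seq (EV.symm (w.1 (p + g).2).1) ((w.1 (p + g).2).2 + (p + g).1).val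
  simp only [Prod.fst_add, Prod.snd_add, add_zero, add_assoc, add_comm g.1]

theorem ColumnCode.bijective_arrayWindow : Bijective fun w : ColumnCode V k t δ =>
    arrayWindow n (2 ^ t - 1) (ColumnCode.array P EV w) 0 := by
  have hcol : Bijective fun q : V × ZMod (2 ^ k) => window n (P.seq (EV.symm q.1)) q.2.val :=
    P.bijective.comp (EV.symm.bijective.prodMap bijective_id)
  convert swap_bijective.comp ((Bijective.piMap fun _ => hcol).comp
    (bijective_restrict_of_sum_eq (2 ^ t) (δ, (0 : ZMod (2 ^ k))))) using 1
  funext w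
  ext x y
  simp [arrayWindow, ColumnCode.array, window, swap, (P.periodic _).apply_val_add_natCast]

end ColumnCode

theorem PerfectFactor.exists_isDBAC {n k : ℕ} (P : PerfectFactor n (2 ^ k)) (hkn : k < n)
    {t : ℕ} (hkt : k ≤ t) :
    ∃ C : Fin (2 ^ (n * (2 ^ t - 1) - k - t)) → (ZMod (2 ^ k) × ZMod (2 ^ t) → ZMod 2),
      IsDBAC (2 ^ k) (2 ^ t) n (2 ^ t - 1) (2 ^ (n * (2 ^ t - 1) - k - t)) C := by
  classical
  have : Fact (k ≤ t) := ⟨hkt⟩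
  have hD : Fintype.card P.D = Fintype.card (Fin (n - k) → ZMod 2) := by
    have h := P.card_mul
    rw [show 2 ^ n = 2 ^ (n - k) * 2 ^ k by rw [← pow_add, Nat.sub_add_cancel hkn.le]] at h
    simpa using Nat.eq_of_mul_eq_mul_right (by positivity) h
  let δ : Fin (n - k) → ZMod 2 := fun _ => 1
  have hδ : δ ≠ 0 := fun h => one_ne_zero (congrFun h ⟨0, by omega⟩)
  refine exists_isDBAC_of_free (Y := ColumnCode _ k t δ) (ColumnCode.eq_zero_of_vadd_eq_self hδ)
    _ (ColumnCode.array_vadd P (Fintype.equivOfCardEq hD))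
    (ColumnCode.bijective_arrayWindow P (Fintype.equivOfCardEq hD)) ?_
  rw [← pow_add, ← pow_add]
  congr 1
  have ht : t ≤ 2 ^ t - 1 := Nat.le_sub_one_of_lt Nat.lt_two_pow_self
  have hmul : (k + 1) * (2 ^ t - 1) ≤ n * (2 ^ t - 1) := Nat.mul_le_mul_right _ hkn
  have hk : k ≤ k * (2 ^ t - 1) := by
    rcases Nat.eq_zero_or_pos k with rfl | hk
    · simp
    · exact Nat.le_mul_of_pos_right k (by omega)
  rw [Nat.sub_sub, Nat.sub_add_cancel (by nlinarith)]

theorem stmt_7_general (k t n : ℕ) (hkn : k < n) (hn : n < 2 ^ k) (hkt : k ≤ t) :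
    ∃ C : Fin (2 ^ (n * (2 ^ t - 1) - k - t)) → (ZMod (2 ^ k) × ZMod (2 ^ t) → ZMod 2),
      IsDBAC (2 ^ k) (2 ^ t) n (2 ^ t - 1) (2 ^ (n * (2 ^ t - 1) - k - t)) C := by
  obtain ⟨P⟩ := PerfectFactor.nonempty hkn hn
  exact P.exists_isDBAC hkn hkt

theorem stmt_7 (k t n : ℕ) (hk : 2 ≤ k) (hkn : k < n) (hn : n < 2 ^ k) (hkt : k ≤ t) :
    ∃ C : Fin (2 ^ (n * (2 ^ t - 1) - k - t)) → (ZMod (2 ^ k) × ZMod (2 ^ t) → ZMod 2),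
      IsDBAC (2 ^ k) (2 ^ t) n (2 ^ t - 1) (2 ^ (n * (2 ^ t - 1) - k - t)) C :=
  stmt_7_general k t n hkn hn hkt
end
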